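/- arXiv:0808.3044 — 2 statements merged into one kernel-verified Lean document; each statement's English description precedes it below -/
import Mathlib

section
/- For every measurable f : (0,∞) → [0,∞), one has ‖S₂f‖ ≤ Ω⁺(b,a)·‖f‖; that is, ∫₀^∞ exp(2B(x)) ( ∫₀ˣ f(z)·exp(2B(z))·( ∫₀^z (1/a(t))·exp(−2B(t)) dt ) dz ) dx ≤ Ω⁺(b,a) · ∫₀^∞ f(x)·exp(2B(x)) dx. -/
open MeasureTheory Set Filter
open scoped ENNReal

/-- `B(x) = ∫₀ˣ (b/a)(y) dy`. -/
noncomputable def Bfun (a b : ℝ → ℝ) (x : ℝ) : ℝ := ∫ y in (0:ℝ)..x, b y / a y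

/-- `‖f‖ = ∫₀^∞ f(x) e^{2B(x)} dx` for nonnegative (extended-real-valued) `f`. -/
noncomputable def wNorm (a b : ℝ → ℝ) (f : ℝ → ℝ≥0∞) : ℝ≥0∞ :=
  ∫⁻ x in Ioi (0:ℝ), f x * ENNReal.ofReal (Real.exp (2 * Bfun a b x))

/-- `S₁f(x) = (∫₀ˣ (1/a) e^{-2B} dz)(∫ₓ^∞ f e^{2B} dz)`. -/
noncomputable def S1 (a b : ℝ → ℝ) (f : ℝ → ℝ≥0∞) : ℝ → ℝ≥0∞ := fun x =>
  ENNReal.ofReal (∫ z in (0:ℝ)..x, (a z)⁻¹ * Real.exp (-2 * Bfun a b z)) *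
    ∫⁻ z in Ioi x, f z * ENNReal.ofReal (Real.exp (2 * Bfun a b z))

/-- `S₂f(x) = ∫₀ˣ f(z) e^{2B(z)} (∫₀^z (1/a) e^{-2B} dt) dz`. -/
noncomputable def S2 (a b : ℝ → ℝ) (f : ℝ → ℝ≥0∞) : ℝ → ℝ≥0∞ := fun x =>
  ∫⁻ z in Ioo (0:ℝ) x,
    f z * ENNReal.ofReal (Real.exp (2 * Bfun a b z) *
      ∫ t in (0:ℝ)..z, (a t)⁻¹ * Real.exp (-2 * Bfun a b t))

/-- `Ω⁺(b,a) = sup_{x>0} (∫₀ˣ (1/a) e^{-2B}) (∫ₓ^∞ e^{2B}) ∈ [0,∞]`. -/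
noncomputable def OmegaPlus (a b : ℝ → ℝ) : ℝ≥0∞ :=
  ⨆ x ∈ Ioi (0:ℝ),
    ENNReal.ofReal (∫ y in (0:ℝ)..x, (a y)⁻¹ * Real.exp (-2 * Bfun a b y)) *
      ∫⁻ y in Ioi x, ENNReal.ofReal (Real.exp (2 * Bfun a b y))

/-! By Tonelli, `‖S₂f‖ = ∫₀^∞ f(z) e^{2B(z)} G(z) (∫_z^∞ e^{2B}) dz` with
`G(z) = ∫₀^z (1/a) e^{-2B}`, and `G(z) ∫_z^∞ e^{2B} ≤ Ω⁺(b,a)` pointwise. -/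

theorem continuousOn_primitive_Ici {h : ℝ → ℝ} {c : ℝ} (hh : ContinuousOn h (Ici c)) :
    ContinuousOn (fun x => ∫ t in c..x, h t) (Ici c) := by
  have hext : Continuous fun t => h (max t c) :=
    hh.comp_continuous (continuous_id.max continuous_const) fun t => le_max_right t c
  refine (intervalIntegral.continuous_primitive
    (fun u v => hext.intervalIntegrable (μ := volume) u v) c).continuousOn.congr fun x hx => ?_
  refine intervalIntegral.integral_congr fun t ht => ?_
  rw [uIcc_of_le (mem_Ici.1 hx)] at ht
  simp only [max_eq_left ht.1]

theorem setLIntegral_lintegral_Ioo_mul_eq {μ : Measure ℝ} [SFinite μ] {c : ℝ} {g w : ℝ → ℝ≥0∞}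
    (hg : AEMeasurable g (μ.restrict (Ioi c))) (hw : AEMeasurable w (μ.restrict (Ioi c))) :
    ∫⁻ x in Ioi c, (∫⁻ z in Ioo c x, g z ∂μ) * w x ∂μ
      = ∫⁻ z in Ioi c, g z * ∫⁻ x in Ioi z, w x ∂μ ∂μ := by
  set F : ℝ × ℝ → ℝ≥0∞ := {q | q.2 < q.1}.indicator fun q => g q.2 * w q.1
  have hF : AEMeasurable F ((μ.restrict (Ioi c)).prod (μ.restrict (Ioi c))) :=
    (hg.comp_snd.mul hw.comp_fst).indicator (measurableSet_lt measurable_snd measurable_fst)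
  have hleft : ∀ x, ∫⁻ z in Ioi c, F (x, z) ∂μ = (∫⁻ z in Ioo c x, g z ∂μ) * w x := by
    intro x
    have hFx : (fun z => F (x, z)) = (Iio x).indicator fun z => g z * w x := by
      ext z; by_cases h : z < x <;> simp [F, h]
    rw [hFx, lintegral_indicator measurableSet_Iio, Measure.restrict_restrict measurableSet_Iio,
      Iio_inter_Ioi, lintegral_mul_const'' _ (hg.mono_set Ioo_subset_Ioi_self)]
  have hright : ∀ z ∈ Ioi c, ∫⁻ x in Ioi c, F (x, z) ∂μ = g z * ∫⁻ x in Ioi z, w x ∂μ := by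
    intro z hz
    have hFz : (fun x => F (x, z)) = (Ioi z).indicator fun x => g z * w x := by
      ext x; by_cases h : z < x <;> simp [F, h]
    rw [hFz, lintegral_indicator measurableSet_Ioi, Measure.restrict_restrict measurableSet_Ioi,
      inter_eq_left.2 (Ioi_subset_Ioi hz.le),
      lintegral_const_mul'' _ (hw.mono_set (Ioi_subset_Ioi hz.le))]
  calc ∫⁻ x in Ioi c, (∫⁻ z in Ioo c x, g z ∂μ) * w x ∂μ
      = ∫⁻ x in Ioi c, ∫⁻ z in Ioi c, F (x, z) ∂μ ∂μ := by simp only [hleft]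
    _ = ∫⁻ z in Ioi c, ∫⁻ x in Ioi c, F (x, z) ∂μ ∂μ := lintegral_lintegral_swap hF
    _ = ∫⁻ z in Ioi c, g z * ∫⁻ x in Ioi z, w x ∂μ ∂μ :=
      setLIntegral_congr_fun measurableSet_Ioi hright

theorem stmt16_general (a b : ℝ → ℝ)
    (ha : ContDiffOn ℝ 1 a (Ici 0)) (hapos : ∀ x ∈ Ici (0:ℝ), 0 < a x)
    (hb : ContinuousOn b (Ici 0))
    (f : ℝ → ℝ≥0∞) (hf : Measurable f) :
    wNorm a b (S2 a b f) ≤ OmegaPlus a b * wNorm a b f := by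
  set G : ℝ → ℝ := fun z => ∫ t in (0:ℝ)..z, (a t)⁻¹ * Real.exp (-2 * Bfun a b t)
  set w : ℝ → ℝ≥0∞ := fun x => ENNReal.ofReal (Real.exp (2 * Bfun a b x))
  have ha₀ : ∀ x ∈ Ici (0:ℝ), a x ≠ 0 := fun x hx => (hapos x hx).ne'
  have hB : ContinuousOn (Bfun a b) (Ici 0) :=
    continuousOn_primitive_Ici (hb.div ha.continuousOn ha₀)
  have hG : ContinuousOn G (Ici 0) := continuousOn_primitive_Ici <|
    (ha.continuousOn.inv₀ ha₀).mul
      (Real.continuous_exp.comp_continuousOn (continuousOn_const.mul hB))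
  have hBm : AEMeasurable (Bfun a b) (volume.restrict (Ioi 0)) :=
    (hB.mono Ioi_subset_Ici_self).aemeasurable measurableSet_Ioi
  have hGm : AEMeasurable G (volume.restrict (Ioi 0)) :=
    (hG.mono Ioi_subset_Ici_self).aemeasurable measurableSet_Ioi
  have hw : AEMeasurable w (volume.restrict (Ioi 0)) := by fun_prop
  have hg : AEMeasurable (fun z => f z * ENNReal.ofReal (Real.exp (2 * Bfun a b z) * G z))
      (volume.restrict (Ioi 0)) := by fun_prop
  have hGΩ : ∀ z ∈ Ioi (0:ℝ), ENNReal.ofReal (G z) * ∫⁻ x in Ioi z, w x ≤ OmegaPlus a b :=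
    fun z hz => le_iSup₂ (f := fun x (_ : x ∈ Ioi (0:ℝ)) =>
      ENNReal.ofReal (G x) * ∫⁻ y in Ioi x, w y) z hz
  calc wNorm a b (S2 a b f)
      = ∫⁻ z in Ioi 0, f z * ENNReal.ofReal (Real.exp (2 * Bfun a b z) * G z) *
          ∫⁻ x in Ioi z, w x := setLIntegral_lintegral_Ioo_mul_eq hg hw
    _ ≤ ∫⁻ z in Ioi 0, f z * w z * OmegaPlus a b := by
      refine setLIntegral_mono' measurableSet_Ioi fun z hz => ?_
      rw [ENNReal.ofReal_mul (Real.exp_pos _).le, mul_assoc, mul_assoc, mul_assoc]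
      gcongr
      exact hGΩ z hz
    _ = OmegaPlus a b * wNorm a b f := by
      rw [lintegral_mul_const'' (f := fun z => f z * w z) _ (hf.aemeasurable.mul hw), mul_comm]
      rfl

theorem stmt16 (a b : ℝ → ℝ)
    (ha : ContDiffOn ℝ 1 a (Ici 0)) (hapos : ∀ x ∈ Ici (0:ℝ), 0 < a x)
    (hb : ContinuousOn b (Ici 0))
    (hinf : ∫⁻ x in Ioi (0:ℝ),
        ENNReal.ofReal ((a x)⁻¹ * Real.exp (-2 * Bfun a b x)) = ⊤)
    (hfin : ∫⁻ x in Ioi (0:ℝ), ENNReal.ofReal (Real.exp (2 * Bfun a b x)) < ⊤)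
    (hΩ : OmegaPlus a b < ⊤)
    (f : ℝ → ℝ≥0∞) (hf : Measurable f) :
    wNorm a b (S2 a b f) ≤ OmegaPlus a b * wNorm a b f :=
  stmt16_general a b ha hapos hb f hf
end

section
/- Let λ > 0 and define Tf = 1 + 2λ(S₁f + S₂f) acting on measurable f : (0,∞) → [0,∞). Then for every integer n ≥ 1, the n-th iterate satisfies ‖Tⁿ1‖ ≤ ( 1 + Σ_{k=1}^n (8λ·Ω⁺(b,a))^k )·‖1‖, where 1 denotes the constant function one. In particular, if λ < 1/(8·Ω⁺(b,a)) then sup_n ‖Tⁿ1‖ < ∞, and hence the nondecreasing limit f_∞ = lim_{n→∞} Tⁿ1 is finite almost everywhere and satisfies the integral equation f_∞(x) = 1 + 2λ ∫₀ˣ (1/a(y))·exp(−2B(y)) ( ∫_y^∞ f_∞(z)·exp(2B(z)) dz ) dy for all x > 0. -/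
open MeasureTheory Set Filter
open scoped ENNReal

/-- `Tf = 1 + 2λ(S₁f + S₂f)`. -/
noncomputable def Titer (a b : ℝ → ℝ) (lam : ℝ) (f : ℝ → ℝ≥0∞) : ℝ → ℝ≥0∞ := fun x =>
  1 + 2 * ENNReal.ofReal lam * (S1 a b f x + S2 a b f x)

open Topology

/-!
Write `C(x) = ∫ₓ^∞ e^{2B}` and `A(x) = ∫₀ˣ a⁻¹e^{-2B}`, so that `A C ≤ Ω⁺` on `(0, ∞)`.
As in Muckenhoupt's proof of the weighted Hardy inequality, test the operators on
`φ = C^{-1/2}`: since `C' = -e^{2B}`, the functions `e^{2B} C^{-1/2}`, `e^{2B} C^{-3/2}` and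
`e^{2B} C^{-1}` are exact derivatives, which gives `S₁φ, S₂φ ≤ 2Ω⁺φ` and
`S₁1 + S₂1 ≤ Ω⁺(1 + log (C(0)/C)) ≤ 2Ω⁺√C(0) φ`. By induction
`Tⁿ1 ≤ 1 + (∑_{k=1}^n r^k) (√C(0)/2) φ` with `r = 8λΩ⁺`, and integrating against `e^{2B}`,
with `‖φ‖ = 2√C(0)` and `‖1‖ = C(0)`, gives the bound on `‖Tⁿ1‖`. When `r < 1`, monotone
convergence shows that `f_∞ = T f_∞` with `‖f_∞‖ < ∞`, and Fubini turns `S₁ + S₂` into the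
iterated integral of the equation.
-/

lemma sum_Icc_one_pow_succ {R : Type*} [CommSemiring R] (r : R) (n : ℕ) :
    ∑ k ∈ Finset.Icc 1 (n + 1), r ^ k = r * (1 + ∑ k ∈ Finset.Icc 1 n, r ^ k) := by
  induction n with
  | zero => simp
  | succ n ih =>
    rw [Finset.sum_Icc_succ_top (show 1 ≤ n + 1 by omega),
      Finset.sum_Icc_succ_top (show 1 ≤ n + 1 + 1 by omega), ih]
    ring

lemma one_add_sum_Icc_one_pow {R : Type*} [CommSemiring R] (r : R) (n : ℕ) :
    1 + ∑ k ∈ Finset.Icc 1 n, r ^ k = ∑ k ∈ Finset.range (n + 1), r ^ k := by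
  induction n with
  | zero => simp
  | succ n ih =>
    rw [Finset.sum_Icc_succ_top (by omega), ← add_assoc, ih, Finset.sum_range_succ _ (n + 1)]

lemma one_add_sum_Icc_one_pow_le (r : ℝ≥0∞) (n : ℕ) :
    1 + ∑ k ∈ Finset.Icc 1 n, r ^ k ≤ (1 - r)⁻¹ := by
  rw [one_add_sum_Icc_one_pow, ← ENNReal.tsum_geometric]
  exact ENNReal.sum_le_tsum _

lemma lintegral_iSup_mul {α : Type*} [MeasurableSpace α] {μ : Measure α} {f : ℕ → α → ℝ≥0∞}
    {k : α → ℝ≥0∞} (hf : ∀ n, AEMeasurable (f n) μ) (hk : AEMeasurable k μ)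
    (hmono : ∀ᵐ z ∂μ, Monotone fun n => f n z) :
    ∫⁻ z, (⨆ n, f n z) * k z ∂μ = ⨆ n, ∫⁻ z, f n z * k z ∂μ := by
  simp_rw [ENNReal.iSup_mul]
  exact lintegral_iSup' (fun n => (hf n).mul hk)
    (hmono.mono fun z hz m n hmn => mul_le_mul_left (hz hmn) _)

lemma lintegral_Ioo_mul_lintegral_Ioi {ρ g : ℝ → ℝ≥0∞}
    (hρ : AEMeasurable ρ (volume.restrict (Ioi 0))) (hg : AEMeasurable g (volume.restrict (Ioi 0)))
    {x : ℝ} (hx : 0 ≤ x) :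
    ∫⁻ y in Ioo 0 x, ρ y * ∫⁻ z in Ioi y, g z =
      (∫⁻ y in Ioo 0 x, ρ y) * (∫⁻ z in Ioi x, g z) +
        ∫⁻ z in Ioo 0 x, g z * ∫⁻ y in Ioo 0 z, ρ y := by
  set K : ℝ × ℝ → ℝ≥0∞ := {p | p.1 < p.2}.indicator fun p => ρ p.1 * g p.2
  have hK : AEMeasurable (Function.uncurry fun y z => K (y, z))
      ((volume.restrict (Ioo 0 x)).prod (volume.restrict (Ioi 0))) :=
    ((hρ.mono_set Ioo_subset_Ioi_self).comp_fst.mul hg.comp_snd).indicator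
      (measurableSet_lt measurable_fst measurable_snd)
  have hK_left : ∀ y ∈ Ioo 0 x, ρ y * ∫⁻ z in Ioi y, g z = ∫⁻ z in Ioi 0, K (y, z) := by
    intro y hy
    have hK_eq : ∀ z, K (y, z) = (Ioi y).indicator (fun z => ρ y * g z) z := fun z => by
      simp only [K, indicator_apply, mem_ofPred_eq, mem_Ioi]
    simp_rw [hK_eq]
    rw [setLIntegral_indicator measurableSet_Ioi, inter_eq_left.2 (Ioi_subset_Ioi hy.1.le),
      lintegral_const_mul'' _ (hg.mono_set (Ioi_subset_Ioi hy.1.le))]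
  have hK_right : ∀ z ∈ Ioi 0, ∫⁻ y in Ioo 0 x, K (y, z) = g z * ∫⁻ y in Ioo 0 (min x z), ρ y := by
    intro z _
    have hK_eq : ∀ y, K (y, z) = (Iio z).indicator (fun y => ρ y * g z) y := fun y => by
      simp only [K, indicator_apply, mem_ofPred_eq, mem_Iio]
    simp_rw [hK_eq]
    rw [setLIntegral_indicator measurableSet_Iio, inter_comm, Ioo_inter_Iio,
      lintegral_mul_const'' _ (hρ.mono_set fun y hy => hy.1), mul_comm]
  calc ∫⁻ y in Ioo 0 x, ρ y * ∫⁻ z in Ioi y, g z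
      = ∫⁻ y in Ioo 0 x, ∫⁻ z in Ioi 0, K (y, z) := setLIntegral_congr_fun measurableSet_Ioo hK_left
    _ = ∫⁻ z in Ioi 0, ∫⁻ y in Ioo 0 x, K (y, z) := lintegral_lintegral_swap hK
    _ = ∫⁻ z in Ioi 0, g z * ∫⁻ y in Ioo 0 (min x z), ρ y :=
        setLIntegral_congr_fun measurableSet_Ioi hK_right
    _ = (∫⁻ z in Ioc 0 x, g z * ∫⁻ y in Ioo 0 z, ρ y) +
          ∫⁻ z in Ioi x, g z * ∫⁻ y in Ioo 0 x, ρ y := by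
        rw [← Ioc_union_Ioi_eq_Ioi hx, lintegral_union measurableSet_Ioi (Ioc_disjoint_Ioi le_rfl)]
        refine congrArg₂ (· + ·) ?_ ?_
        · exact setLIntegral_congr_fun measurableSet_Ioc fun z hz => by rw [min_eq_right hz.2]
        · exact setLIntegral_congr_fun measurableSet_Ioi fun z hz => by
            rw [min_eq_left (mem_Ioi.1 hz).le]
    _ = _ := by
        have hIoc : ∫⁻ z in Ioc 0 x, g z * ∫⁻ y in Ioo 0 z, ρ y =
            ∫⁻ z in Ioo 0 x, g z * ∫⁻ y in Ioo 0 z, ρ y := (setLIntegral_congr Ioo_ae_eq_Ioc).symm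
        rw [hIoc, lintegral_mul_const'' _ (hg.mono_set (Ioi_subset_Ioi hx)), add_comm, mul_comm]

lemma continuousOn_Ici_primitive {f : ℝ → ℝ} {c : ℝ} (hf : ContinuousOn f (Ici c)) :
    ContinuousOn (fun x => ∫ t in c..x, f t) (Ici c) := by
  intro x hx
  have hcx : c ≤ x + 1 := by linarith [mem_Ici.1 hx]
  have hIcc : ContinuousOn (fun x => ∫ t in c..x, f t) (Icc c (x + 1)) := by
    have := intervalIntegral.continuousOn_primitive_interval (μ := volume) (a := c) (b := x + 1)
      (f := f) (by rw [uIcc_of_le hcx]; exact (hf.mono Icc_subset_Ici_self).integrableOn_Icc)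
    rwa [uIcc_of_le hcx] at this
  exact (hIcc x ⟨hx, by linarith⟩).mono_of_mem_nhdsWithin
    (mem_nhdsWithin.2 ⟨Iio (x + 1), isOpen_Iio, by simp, fun z hz => ⟨hz.2, hz.1.le⟩⟩)

lemma aemeasurable_ofReal_of_continuousOn_Ici {f : ℝ → ℝ} (hf : ContinuousOn f (Ici 0)) :
    AEMeasurable (fun x => ENNReal.ofReal (f x)) (volume.restrict (Ioi 0)) :=
  ((hf.mono Ioi_subset_Ici_self).aemeasurable measurableSet_Ioi).ennreal_ofReal

lemma hasDerivAt_two_mul_sqrt {c : ℝ} (hc : 0 < c) : HasDerivAt (fun c => 2 * √c) (√c)⁻¹ c :=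
  ((Real.hasDerivAt_sqrt hc.ne').const_mul 2).congr_deriv (by field_simp)

lemma hasDerivAt_neg_two_mul_inv_sqrt {c : ℝ} (hc : 0 < c) :
    HasDerivAt (fun c => -(2 * (√c)⁻¹)) (c * √c)⁻¹ c := by
  have hs : √c ≠ 0 := (Real.sqrt_pos.2 hc).ne'
  refine (((Real.hasDerivAt_sqrt hc.ne').inv hs).const_mul 2).neg.congr_deriv ?_
  rw [show c * √c = √c ^ 2 * √c by rw [Real.sq_sqrt hc.le]]
  field_simp

lemma one_add_log_le_two_mul_sqrt {t : ℝ} (ht : 0 < t) : 1 + Real.log t ≤ 2 * √t := by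
  have h := Real.log_le_sub_one_of_pos (Real.sqrt_pos.2 ht)
  rw [Real.log_sqrt ht.le] at h
  linarith

noncomputable def tail (w : ℝ → ℝ) (x : ℝ) : ℝ := ∫ z in Ioi x, w z

noncomputable def invSqrtTail (w : ℝ → ℝ) (x : ℝ) : ℝ≥0∞ := ENNReal.ofReal (√(tail w x))⁻¹

section Tail

variable {w : ℝ → ℝ} (hw : ContinuousOn w (Ici 0)) (hwi : IntegrableOn w (Ioi 0))
  (hw_pos : ∀ x ∈ Ici (0:ℝ), 0 < w x)

include hwi in
lemma intervalIntegral_add_tail {s t : ℝ} (hs : 0 ≤ s) (hst : s ≤ t) :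
    (∫ z in s..t, w z) + tail w t = tail w s := by
  rw [intervalIntegral.integral_of_le hst, tail, tail, ← setIntegral_union
    (Ioc_disjoint_Ioi le_rfl) measurableSet_Ioi (hwi.mono_set fun z hz => hs.trans_lt hz.1)
    (hwi.mono_set fun z hz => (hs.trans hst).trans_lt hz), Ioc_union_Ioi_eq_Ioi hst]

include hw hwi in
lemma continuousOn_tail : ContinuousOn (tail w) (Ici 0) := by
  refine (continuousOn_const (c := tail w 0).sub (continuousOn_Ici_primitive hw)).congr
    fun x hx => eq_sub_of_add_eq' (intervalIntegral_add_tail hwi le_rfl hx)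

include hw hwi in
lemma hasDerivAt_tail {x : ℝ} (hx : 0 < x) : HasDerivAt (tail w) (-w x) x := by
  have hprim : HasDerivAt (fun u => ∫ z in 0..u, w z) (w x) x :=
    intervalIntegral.integral_hasDerivAt_right
      ((hw.mono Icc_subset_Ici_self).intervalIntegrable_of_Icc hx.le)
      ((hw.mono Ioi_subset_Ici_self).stronglyMeasurableAtFilter isOpen_Ioi x hx)
      (hw.continuousAt (Ici_mem_nhds hx))
  refine (hprim.const_sub (tail w 0)).congr_of_eventuallyEq ?_
  filter_upwards [Ioi_mem_nhds hx] with u hu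
  rw [← intervalIntegral_add_tail hwi le_rfl (mem_Ioi.1 hu).le]
  ring

include hw hwi hw_pos in
lemma tail_pos {x : ℝ} (hx : 0 ≤ x) : 0 < tail w x := by
  rw [← intervalIntegral_add_tail hwi hx (le_add_of_nonneg_right zero_le_one)]
  refine add_pos_of_pos_of_nonneg (intervalIntegral.intervalIntegral_pos_of_pos_on
    ((hw.mono fun z hz => hx.trans hz.1).intervalIntegrable_of_Icc (by linarith))
    (fun z hz => hw_pos z (hx.trans hz.1.le)) (by linarith)) ?_
  exact setIntegral_nonneg measurableSet_Ioi fun z hz =>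
    (hw_pos z (mem_Ici.2 (by linarith [mem_Ioi.1 hz]))).le

include hw hwi hw_pos in
lemma aemeasurable_invSqrtTail : AEMeasurable (invSqrtTail w) (volume.restrict (Ioi 0)) :=
  aemeasurable_ofReal_of_continuousOn_Ici ((continuousOn_tail hw hwi).sqrt.inv₀ fun _ hz =>
    (Real.sqrt_pos.2 (tail_pos hw hwi hw_pos hz)).ne')

include hwi hw_pos in
lemma antitoneOn_tail : AntitoneOn (tail w) (Ici 0) := fun s hs t _ hst => by
  rw [← intervalIntegral_add_tail hwi hs hst]
  exact le_add_of_nonneg_left (intervalIntegral.integral_nonneg hst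
    fun z hz => (hw_pos z (hs.trans hz.1)).le)

include hwi in
lemma tendsto_tail_atTop : Tendsto (tail w) atTop (𝓝 0) := by
  have h := (intervalIntegral_tendsto_integral_Ioi 0 hwi tendsto_id).const_sub (tail w 0)
  rw [← tail, sub_self] at h
  refine h.congr' ?_
  filter_upwards [eventually_ge_atTop 0] with x hx
  rw [← intervalIntegral_add_tail hwi le_rfl hx]
  simp

include hwi hw_pos in
lemma lintegral_Ioi_ofReal_eq_ofReal_tail {x : ℝ} (hx : 0 ≤ x) :
    ∫⁻ z in Ioi x, ENNReal.ofReal (w z) = ENNReal.ofReal (tail w x) :=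
  (ofReal_integral_eq_lintegral_ofReal (hwi.mono_set (Ioi_subset_Ioi hx))
    ((ae_restrict_iff' measurableSet_Ioi).2 (.of_forall fun z hz =>
      (hw_pos z (hx.trans (mem_Ioi.1 hz).le)).le))).symm

include hw hwi hw_pos in
lemma continuousOn_mul_comp_tail {G : ℝ → ℝ} (hG : ContinuousOn G (Ioi 0)) :
    ContinuousOn (fun z => w z * G (tail w z)) (Ici 0) :=
  hw.mul (hG.comp (continuousOn_tail hw hwi) fun _ hz => tail_pos hw hwi hw_pos hz)

include hw hwi in
lemma hasDerivAt_neg_comp_tail {F : ℝ → ℝ} {F' x : ℝ} (hF : HasDerivAt F F' (tail w x))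
    (hx : 0 < x) : HasDerivAt (fun z => -F (tail w z)) (w x * F') x :=
  (hF.comp x (hasDerivAt_tail hw hwi hx)).neg.congr_deriv (by ring)

include hw hwi hw_pos in
lemma integral_mul_comp_tail {F F' : ℝ → ℝ} (hF : ∀ c ∈ Ioi (0:ℝ), HasDerivAt F (F' c) c)
    (hF' : ContinuousOn F' (Ioi 0)) {s t : ℝ} (hs : 0 ≤ s) (hst : s ≤ t) :
    ∫ z in s..t, w z * F' (tail w z) = F (tail w s) - F (tail w t) := by
  have hIcc : Icc s t ⊆ Ici 0 := fun z hz => hs.trans hz.1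
  have hFc : ContinuousOn F (Ioi 0) := fun c hc => (hF c hc).continuousAt.continuousWithinAt
  have hFC : ContinuousOn (fun z => -F (tail w z)) (Icc s t) :=
    (hFc.comp ((continuousOn_tail hw hwi).mono hIcc)
      fun z hz => tail_pos hw hwi hw_pos (hIcc hz)).neg
  rw [intervalIntegral.integral_eq_sub_of_hasDerivAt_of_le hst hFC
    (fun z hz => hasDerivAt_neg_comp_tail hw hwi
      (hF _ (tail_pos hw hwi hw_pos (hs.trans hz.1.le))) (hs.trans_lt hz.1))
    (((continuousOn_mul_comp_tail hw hwi hw_pos hF').mono hIcc).intervalIntegrable_of_Icc hst)]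
  ring

include hw hwi hw_pos in
lemma lintegral_Ioo_mul_comp_tail {F F' : ℝ → ℝ} (hF : ∀ c ∈ Ioi (0:ℝ), HasDerivAt F (F' c) c)
    (hF' : ContinuousOn F' (Ioi 0)) (hF'_nonneg : ∀ c ∈ Ioi (0:ℝ), 0 ≤ F' c) {x : ℝ}
    (hx : 0 ≤ x) :
    ∫⁻ z in Ioo 0 x, ENNReal.ofReal (w z * F' (tail w z)) =
      ENNReal.ofReal (F (tail w 0) - F (tail w x)) := by
  rw [setLIntegral_congr Ioo_ae_eq_Ioc, ← integral_mul_comp_tail hw hwi hw_pos hF hF' le_rfl hx,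
    intervalIntegral.integral_of_le hx, ofReal_integral_eq_lintegral_ofReal]
  · exact ((continuousOn_mul_comp_tail hw hwi hw_pos hF').mono Icc_subset_Ici_self
      |>.integrableOn_Icc).mono_set Ioc_subset_Icc_self
  · refine (ae_restrict_iff' measurableSet_Ioc).2 (.of_forall fun z hz => ?_)
    exact mul_nonneg (hw_pos z hz.1.le).le (hF'_nonneg _ (tail_pos hw hwi hw_pos hz.1.le))

include hw hwi hw_pos in
lemma lintegral_Ioi_invSqrtTail_mul {x : ℝ} (hx : 0 ≤ x) :
    ∫⁻ z in Ioi x, invSqrtTail w z * ENNReal.ofReal (w z) = ENNReal.ofReal (2 * √(tail w x)) := by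
  have hderiv : ∀ z ∈ Ioi x, HasDerivAt (fun z => -(2 * √(tail w z)))
      (w z * (√(tail w z))⁻¹) z := fun z hz =>
    hasDerivAt_neg_comp_tail hw hwi (hasDerivAt_two_mul_sqrt (tail_pos hw hwi hw_pos
      (hx.trans (mem_Ioi.1 hz).le))) (hx.trans_lt hz)
  have hcont : ContinuousWithinAt (fun z => -(2 * √(tail w z))) (Ici x) x :=
    ((continuousOn_const (c := 2).mul ((continuousOn_tail hw hwi).mono
      (Ici_subset_Ici.2 hx)).sqrt).neg x self_mem_Ici)
  have hnonneg : ∀ z ∈ Ioi x, 0 ≤ w z * (√(tail w z))⁻¹ := fun z hz =>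
    mul_nonneg (hw_pos z (hx.trans (mem_Ioi.1 hz).le)).le (by positivity)
  have hlim : Tendsto (fun z => -(2 * √(tail w z))) atTop (𝓝 0) := by
    simpa using ((Real.continuous_sqrt.tendsto 0).comp (tendsto_tail_atTop hwi)).const_mul 2 |>.neg
  have hint := integral_Ioi_of_hasDerivAt_of_nonneg hcont hderiv hnonneg hlim
  rw [sub_neg_eq_add, zero_add] at hint
  rw [← hint, ofReal_integral_eq_lintegral_ofReal
    (integrableOn_Ioi_deriv_of_nonneg hcont hderiv hnonneg hlim)
    ((ae_restrict_iff' measurableSet_Ioi).2 (.of_forall hnonneg))]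
  refine setLIntegral_congr_fun measurableSet_Ioi fun z hz => ?_
  rw [invSqrtTail, ENNReal.ofReal_mul (hw_pos z (hx.trans (mem_Ioi.1 hz).le)).le, mul_comm]

end Tail

noncomputable def weight (a b : ℝ → ℝ) (x : ℝ) : ℝ := Real.exp (2 * Bfun a b x)

noncomputable def density (a b : ℝ → ℝ) (x : ℝ) : ℝ := (a x)⁻¹ * Real.exp (-2 * Bfun a b x)

noncomputable def densityIntegral (a b : ℝ → ℝ) (x : ℝ) : ℝ := ∫ y in (0:ℝ)..x, density a b y

section Coefficients

variable {a b : ℝ → ℝ} (ha : ContinuousOn a (Ici 0)) (hapos : ∀ x ∈ Ici (0:ℝ), 0 < a x)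
  (hb : ContinuousOn b (Ici 0))

include ha hapos hb in
lemma continuousOn_Bfun : ContinuousOn (Bfun a b) (Ici 0) :=
  continuousOn_Ici_primitive (hb.div ha fun x hx => (hapos x hx).ne')

include ha hapos hb in
lemma continuousOn_weight : ContinuousOn (weight a b) (Ici 0) :=
  Real.continuous_exp.comp_continuousOn (continuousOn_const.mul (continuousOn_Bfun ha hapos hb))

include ha hapos hb in
lemma continuousOn_density : ContinuousOn (density a b) (Ici 0) :=
  (ha.inv₀ fun x hx => (hapos x hx).ne').mul
    (Real.continuous_exp.comp_continuousOn (continuousOn_const.mul (continuousOn_Bfun ha hapos hb)))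

include hapos in
lemma density_nonneg {x : ℝ} (hx : x ∈ Ici 0) : 0 ≤ density a b x :=
  mul_nonneg (inv_pos.2 (hapos x hx)).le (Real.exp_pos _).le

lemma weight_pos (x : ℝ) : 0 < weight a b x := Real.exp_pos _

lemma integrableOn_weight (hw : ContinuousOn (weight a b) (Ici 0))
    (hfin : ∫⁻ x in Ioi (0:ℝ), ENNReal.ofReal (weight a b x) < ⊤) :
    IntegrableOn (weight a b) (Ioi 0) :=
  ⟨(hw.mono Ioi_subset_Ici_self).aestronglyMeasurable measurableSet_Ioi,
    (hasFiniteIntegral_iff_ofReal (.of_forall fun x => (weight_pos x).le)).2 hfin⟩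

end Coefficients

section Operators

variable {a b : ℝ → ℝ}

lemma S1_apply (f : ℝ → ℝ≥0∞) (x : ℝ) :
    S1 a b f x = ENNReal.ofReal (densityIntegral a b x) *
      ∫⁻ z in Ioi x, f z * ENNReal.ofReal (weight a b z) := rfl

lemma S2_apply (f : ℝ → ℝ≥0∞) (x : ℝ) :
    S2 a b f x = ∫⁻ z in Ioo 0 x, f z * ENNReal.ofReal (weight a b z * densityIntegral a b z) :=
  rfl

variable {x : ℝ} (hw : ContinuousOn (weight a b) (Ici 0))
  (hwi : IntegrableOn (weight a b) (Ioi 0))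

include hwi in
lemma ofReal_densityIntegral_mul_ofReal_tail_le (hx : 0 < x) :
    ENNReal.ofReal (densityIntegral a b x) * ENNReal.ofReal (tail (weight a b) x) ≤
      OmegaPlus a b := by
  rw [← lintegral_Ioi_ofReal_eq_ofReal_tail hwi (fun z _ => weight_pos z) hx.le]
  exact le_iSup₂ (f := fun x (_ : x ∈ Ioi (0:ℝ)) => ENNReal.ofReal (densityIntegral a b x) *
    ∫⁻ y in Ioi x, ENNReal.ofReal (weight a b y)) x hx

include hw hwi in
lemma ofReal_mul_densityIntegral_mul_tail_le {p : ℝ} (hp : 0 ≤ p) (hx : 0 < x) :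
    ENNReal.ofReal (p * (densityIntegral a b x * tail (weight a b) x)) ≤
      ENNReal.ofReal p * OmegaPlus a b := by
  rw [ENNReal.ofReal_mul hp,
    ENNReal.ofReal_mul' (tail_pos hw hwi (fun z _ => weight_pos z) hx.le).le]
  gcongr
  exact ofReal_densityIntegral_mul_ofReal_tail_le hwi hx

include hwi in
lemma S1_one_le (hx : 0 < x) : S1 a b (fun _ => 1) x ≤ OmegaPlus a b := by
  simp only [S1_apply, one_mul]
  rw [lintegral_Ioi_ofReal_eq_ofReal_tail hwi (fun z _ => weight_pos z) hx.le]
  exact ofReal_densityIntegral_mul_ofReal_tail_le hwi hx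

include hw hwi in
lemma S1_invSqrtTail_le (hx : 0 < x) :
    S1 a b (invSqrtTail (weight a b)) x ≤ 2 * OmegaPlus a b * invSqrtTail (weight a b) x := by
  set C := tail (weight a b) x
  have hC : 0 < C := tail_pos hw hwi (fun z _ => weight_pos z) hx.le
  have hsq : √C ^ 2 = C := Real.sq_sqrt hC.le
  rw [S1_apply, lintegral_Ioi_invSqrtTail_mul hw hwi (fun z _ => weight_pos z) hx.le,
    ← ENNReal.ofReal_mul' (by positivity)]
  calc ENNReal.ofReal (densityIntegral a b x * (2 * √C))
      = ENNReal.ofReal (2 * (√C)⁻¹ * (densityIntegral a b x * C)) := by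
        congr 1
        field_simp
        rw [hsq]
    _ ≤ ENNReal.ofReal (2 * (√C)⁻¹) * OmegaPlus a b :=
        ofReal_mul_densityIntegral_mul_tail_le hw hwi (by positivity) hx
    _ = 2 * OmegaPlus a b * invSqrtTail (weight a b) x := by
        rw [ENNReal.ofReal_mul zero_le_two, ENNReal.ofReal_ofNat, invSqrtTail]
        ring

include hw hwi in
lemma S2_invSqrtTail_le (hx : 0 < x) :
    S2 a b (invSqrtTail (weight a b)) x ≤ 2 * OmegaPlus a b * invSqrtTail (weight a b) x := by
  have hpos : ∀ z, 0 ≤ z → 0 < tail (weight a b) z := fun z hz =>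
    tail_pos hw hwi (fun z _ => weight_pos z) hz
  have hF' : ContinuousOn (fun c : ℝ => (c * √c)⁻¹) (Ioi 0) :=
    (continuousOn_id.mul Real.continuous_sqrt.continuousOn).inv₀ fun c hc =>
      (mul_pos hc (Real.sqrt_pos.2 hc)).ne'
  rw [S2_apply]
  calc ∫⁻ z in Ioo 0 x, invSqrtTail (weight a b) z *
        ENNReal.ofReal (weight a b z * densityIntegral a b z)
      ≤ ∫⁻ z in Ioo 0 x, ENNReal.ofReal (weight a b z *
          (tail (weight a b) z * √(tail (weight a b) z))⁻¹) * OmegaPlus a b := by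
        refine setLIntegral_mono' measurableSet_Ioo fun z hz => ?_
        have hC := hpos z hz.1.le
        rw [invSqrtTail, ← ENNReal.ofReal_mul (by positivity)]
        convert ofReal_mul_densityIntegral_mul_tail_le hw hwi (p := weight a b z *
          (tail (weight a b) z * √(tail (weight a b) z))⁻¹)
          (mul_nonneg (weight_pos z).le (inv_nonneg.2 (by positivity))) hz.1 using 2
        field_simp
    _ = ENNReal.ofReal (-(2 * (√(tail (weight a b) 0))⁻¹) - -(2 * (√(tail (weight a b) x))⁻¹)) *
          OmegaPlus a b := by
        rw [lintegral_mul_const'' _ (((continuousOn_mul_comp_tail hw hwi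
          (fun z _ => weight_pos z) hF').mono fun z hz => hz.1.le)
            |>.aemeasurable measurableSet_Ioo |>.ennreal_ofReal),
          lintegral_Ioo_mul_comp_tail hw hwi (fun z _ => weight_pos z)
            (fun c hc => hasDerivAt_neg_two_mul_inv_sqrt hc) hF'
            (fun c hc => by have := mem_Ioi.1 hc; positivity) hx.le]
    _ ≤ ENNReal.ofReal (2 * (√(tail (weight a b) x))⁻¹) * OmegaPlus a b := by
        gcongr
        have : 0 ≤ (√(tail (weight a b) 0))⁻¹ := by positivity
        linarith
    _ = 2 * OmegaPlus a b * invSqrtTail (weight a b) x := by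
        rw [ENNReal.ofReal_mul zero_le_two, ENNReal.ofReal_ofNat, invSqrtTail]
        ring

include hw hwi in
lemma S2_one_le (hx : 0 < x) :
    S2 a b (fun _ => 1) x ≤
      ENNReal.ofReal (Real.log (tail (weight a b) 0) - Real.log (tail (weight a b) x)) *
        OmegaPlus a b := by
  have hpos : ∀ z, 0 ≤ z → 0 < tail (weight a b) z := fun z hz =>
    tail_pos hw hwi (fun z _ => weight_pos z) hz
  have hF' : ContinuousOn (fun c : ℝ => c⁻¹) (Ioi 0) := continuousOn_inv₀.mono fun c hc => hc.ne'
  rw [S2_apply]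
  calc ∫⁻ z in Ioo 0 x, 1 * ENNReal.ofReal (weight a b z * densityIntegral a b z)
      ≤ ∫⁻ z in Ioo 0 x, ENNReal.ofReal (weight a b z * (tail (weight a b) z)⁻¹) *
          OmegaPlus a b := by
        refine setLIntegral_mono' measurableSet_Ioo fun z hz => ?_
        have hC := hpos z hz.1.le
        rw [one_mul]
        convert ofReal_mul_densityIntegral_mul_tail_le hw hwi
          (p := weight a b z * (tail (weight a b) z)⁻¹)
          (mul_nonneg (weight_pos z).le (inv_nonneg.2 hC.le)) hz.1 using 2
        field_simp
    _ = _ := by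
        rw [lintegral_mul_const'' _ (((continuousOn_mul_comp_tail hw hwi
          (fun z _ => weight_pos z) hF').mono fun z hz => hz.1.le)
            |>.aemeasurable measurableSet_Ioo |>.ennreal_ofReal),
          lintegral_Ioo_mul_comp_tail hw hwi (fun z _ => weight_pos z)
            (fun c hc => Real.hasDerivAt_log (mem_Ioi.1 hc).ne') hF'
            (fun c hc => inv_nonneg.2 (mem_Ioi.1 hc).le) hx.le]

include hw hwi in
lemma S1_add_S2_invSqrtTail_le (hx : 0 < x) :
    S1 a b (invSqrtTail (weight a b)) x + S2 a b (invSqrtTail (weight a b)) x ≤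
      4 * OmegaPlus a b * invSqrtTail (weight a b) x :=
  (add_le_add (S1_invSqrtTail_le hw hwi hx) (S2_invSqrtTail_le hw hwi hx)).trans_eq (by ring)

include hw hwi in
lemma S1_add_S2_one_le (hx : 0 < x) :
    S1 a b (fun _ => 1) x + S2 a b (fun _ => 1) x ≤
      4 * OmegaPlus a b * ENNReal.ofReal (√(tail (weight a b) 0) / 2) *
        invSqrtTail (weight a b) x := by
  set C₀ := tail (weight a b) 0
  set C := tail (weight a b) x
  have hC₀ : 0 < C₀ := tail_pos hw hwi (fun z _ => weight_pos z) le_rfl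
  have hC : 0 < C := tail_pos hw hwi (fun z _ => weight_pos z) hx.le
  have hCC₀ : C ≤ C₀ := antitoneOn_tail hwi (fun z _ => weight_pos z) self_mem_Ici hx.le hx.le
  have hlog : 0 ≤ Real.log (C₀ / C) := Real.log_nonneg ((one_le_div hC).2 hCC₀)
  calc S1 a b (fun _ => 1) x + S2 a b (fun _ => 1) x
      ≤ OmegaPlus a b + ENNReal.ofReal (Real.log C₀ - Real.log C) * OmegaPlus a b :=
        add_le_add (S1_one_le hwi hx) (S2_one_le hw hwi hx)
    _ = ENNReal.ofReal (1 + Real.log (C₀ / C)) * OmegaPlus a b := by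
        rw [ENNReal.ofReal_add zero_le_one hlog, ENNReal.ofReal_one,
          Real.log_div hC₀.ne' hC.ne']
        ring
    _ ≤ ENNReal.ofReal (2 * √(C₀ / C)) * OmegaPlus a b := by
        gcongr
        exact one_add_log_le_two_mul_sqrt (div_pos hC₀ hC)
    _ = 4 * OmegaPlus a b * ENNReal.ofReal (√C₀ / 2) * invSqrtTail (weight a b) x := by
        rw [Real.sqrt_div' _ hC.le, show 2 * (√C₀ / √C) = 4 * (√C₀ / 2) * (√C)⁻¹ by ring,
          ENNReal.ofReal_mul (by positivity), ENNReal.ofReal_mul (by positivity),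
          ENNReal.ofReal_ofNat, invSqrtTail]
        ring

include hw in
lemma S1_one_add_mul {g : ℝ → ℝ≥0∞} (hg : AEMeasurable g (volume.restrict (Ioi 0)))
    (β : ℝ≥0∞) (hx : 0 ≤ x) :
    S1 a b (fun z => 1 + β * g z) x = S1 a b (fun _ => 1) x + β * S1 a b g x := by
  have hw' := aemeasurable_ofReal_of_continuousOn_Ici hw
  have hgw : AEMeasurable (fun z => g z * ENNReal.ofReal (weight a b z))
      (volume.restrict (Ioi 0)) := hg.mul hw'
  simp only [S1_apply, add_mul, one_mul, mul_assoc]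
  rw [lintegral_add_left' (hw'.mono_set (Ioi_subset_Ioi hx)),
    lintegral_const_mul'' _ (hgw.mono_set (Ioi_subset_Ioi hx))]
  ring

variable (hρ : ContinuousOn (density a b) (Ici 0))

include hw hρ in
lemma S2_one_add_mul {g : ℝ → ℝ≥0∞} (hg : AEMeasurable g (volume.restrict (Ioi 0)))
    (β : ℝ≥0∞) :
    S2 a b (fun z => 1 + β * g z) x = S2 a b (fun _ => 1) x + β * S2 a b g x := by
  have hwA : AEMeasurable (fun z => ENNReal.ofReal (weight a b z * densityIntegral a b z))
      (volume.restrict (Ioi 0)) :=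
    aemeasurable_ofReal_of_continuousOn_Ici (hw.mul (continuousOn_Ici_primitive hρ))
  have hgwA : AEMeasurable (fun z => g z * ENNReal.ofReal (weight a b z * densityIntegral a b z))
      (volume.restrict (Ioi 0)) := hg.mul hwA
  simp only [S2_apply, add_mul, one_mul, mul_assoc]
  rw [lintegral_add_left' (hwA.mono_set Ioo_subset_Ioi_self),
    lintegral_const_mul'' _ (hgwA.mono_set Ioo_subset_Ioi_self)]

include hw hwi hρ in
lemma Titer_one_add_mul_invSqrtTail_le (lam : ℝ) (β : ℝ≥0∞) (hx : 0 < x) :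
    Titer a b lam (fun z => 1 + β * invSqrtTail (weight a b) z) x ≤
      1 + 8 * ENNReal.ofReal lam * OmegaPlus a b *
        (ENNReal.ofReal (√(tail (weight a b) 0) / 2) + β) * invSqrtTail (weight a b) x := by
  have hφ := aemeasurable_invSqrtTail hw hwi fun z _ => weight_pos (a := a) (b := b) z
  rw [Titer, S1_one_add_mul hw hφ β hx.le, S2_one_add_mul hw hρ hφ β]
  calc 1 + 2 * ENNReal.ofReal lam * (S1 a b (fun _ => 1) x + β * S1 a b (invSqrtTail (weight a b)) x
        + (S2 a b (fun _ => 1) x + β * S2 a b (invSqrtTail (weight a b)) x))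
      = 1 + 2 * ENNReal.ofReal lam * ((S1 a b (fun _ => 1) x + S2 a b (fun _ => 1) x)
        + β * (S1 a b (invSqrtTail (weight a b)) x + S2 a b (invSqrtTail (weight a b)) x)) := by
        ring
    _ ≤ 1 + 2 * ENNReal.ofReal lam * (4 * OmegaPlus a b *
          ENNReal.ofReal (√(tail (weight a b) 0) / 2) * invSqrtTail (weight a b) x
        + β * (4 * OmegaPlus a b * invSqrtTail (weight a b) x)) := by
        gcongr
        · exact S1_add_S2_one_le hw hwi hx
        · exact S1_add_S2_invSqrtTail_le hw hwi hx
    _ = _ := by ring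

end Operators

section Iteration

variable {a b : ℝ → ℝ} {lam x : ℝ}

lemma S1_mono {f g : ℝ → ℝ≥0∞} (h : ∀ z ∈ Ioi (0:ℝ), f z ≤ g z) (hx : 0 ≤ x) :
    S1 a b f x ≤ S1 a b g x := by
  rw [S1_apply, S1_apply]
  gcongr _ * ?_
  exact setLIntegral_mono' measurableSet_Ioi fun z hz => by
    gcongr
    exact h z (hx.trans_lt hz)

lemma S2_mono {f g : ℝ → ℝ≥0∞} (h : ∀ z ∈ Ioi (0:ℝ), f z ≤ g z) :
    S2 a b f x ≤ S2 a b g x :=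
  setLIntegral_mono' measurableSet_Ioo fun z hz => by
    gcongr
    exact h z hz.1

lemma Titer_mono {f g : ℝ → ℝ≥0∞} (h : ∀ z ∈ Ioi (0:ℝ), f z ≤ g z) (hx : 0 ≤ x) :
    Titer a b lam f x ≤ Titer a b lam g x := by
  unfold Titer
  gcongr
  exacts [S1_mono h hx, S2_mono h]

lemma iterate_Titer_one_le_succ (n : ℕ) (hx : 0 < x) :
    (Titer a b lam)^[n] (fun _ => 1) x ≤ (Titer a b lam)^[n + 1] (fun _ => 1) x := by
  induction n generalizing x with
  | zero => exact le_self_add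
  | succ n ih =>
    rw [Function.iterate_succ_apply', Function.iterate_succ_apply' _ (n + 1)]
    exact Titer_mono (fun z hz => ih hz) hx.le

lemma monotone_iterate_Titer_one (hx : 0 < x) :
    Monotone fun n => (Titer a b lam)^[n] (fun _ => 1) x :=
  monotone_nat_of_le_succ fun n => iterate_Titer_one_le_succ n hx

variable (hw : ContinuousOn (weight a b) (Ici 0)) (hwi : IntegrableOn (weight a b) (Ioi 0))
  (hρ : ContinuousOn (density a b) (Ici 0))

include hw hwi hρ in
lemma iterate_Titer_one_le (n : ℕ) (hx : 0 < x) :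
    (Titer a b lam)^[n] (fun _ => 1) x ≤
      1 + (∑ k ∈ Finset.Icc 1 n, (8 * ENNReal.ofReal lam * OmegaPlus a b) ^ k) *
        ENNReal.ofReal (√(tail (weight a b) 0) / 2) * invSqrtTail (weight a b) x := by
  induction n generalizing x with
  | zero => simp
  | succ n ih =>
    rw [Function.iterate_succ_apply', sum_Icc_one_pow_succ]
    refine (Titer_mono (g := fun z => 1 + ((∑ k ∈ Finset.Icc 1 n,
      (8 * ENNReal.ofReal lam * OmegaPlus a b) ^ k) * ENNReal.ofReal (√(tail (weight a b) 0) / 2))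
        * invSqrtTail (weight a b) z) (fun z hz => ih hz) hx.le).trans ?_
    refine (Titer_one_add_mul_invSqrtTail_le hw hwi hρ lam _ hx).trans_eq ?_
    ring

include hwi in
lemma wNorm_one : wNorm a b (fun _ => 1) = ENNReal.ofReal (tail (weight a b) 0) := by
  simp only [wNorm, one_mul]
  exact lintegral_Ioi_ofReal_eq_ofReal_tail hwi (fun z _ => weight_pos z) le_rfl

include hw hwi hρ in
lemma wNorm_iterate_Titer_one_le (n : ℕ) :
    wNorm a b ((Titer a b lam)^[n] (fun _ => 1)) ≤
      (1 + ∑ k ∈ Finset.Icc 1 n, (8 * ENNReal.ofReal lam * OmegaPlus a b) ^ k) *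
        wNorm a b (fun _ => 1) := by
  set s := ∑ k ∈ Finset.Icc 1 n, (8 * ENNReal.ofReal lam * OmegaPlus a b) ^ k
  set C₀ := tail (weight a b) 0
  have hw' := aemeasurable_ofReal_of_continuousOn_Ici hw
  have hφw : AEMeasurable (fun z => invSqrtTail (weight a b) z * ENNReal.ofReal (weight a b z))
      (volume.restrict (Ioi 0)) := by
    exact (aemeasurable_invSqrtTail hw hwi fun z _ => weight_pos z).mul hw'
  calc wNorm a b ((Titer a b lam)^[n] (fun _ => 1))
      ≤ ∫⁻ z in Ioi 0, (1 + s * ENNReal.ofReal (√C₀ / 2) * invSqrtTail (weight a b) z) *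
          ENNReal.ofReal (weight a b z) :=
        setLIntegral_mono' measurableSet_Ioi fun z hz =>
          mul_le_mul_left (iterate_Titer_one_le hw hwi hρ n hz) _
    _ = ENNReal.ofReal C₀ + s * ENNReal.ofReal (√C₀ / 2) * ENNReal.ofReal (2 * √C₀) := by
        simp only [add_mul, one_mul, mul_assoc]
        rw [lintegral_add_left' hw', lintegral_const_mul'' _ (hφw.const_mul _),
          lintegral_const_mul'' _ hφw,
          lintegral_Ioi_ofReal_eq_ofReal_tail hwi (fun z _ => weight_pos z) le_rfl,
          lintegral_Ioi_invSqrtTail_mul hw hwi (fun z _ => weight_pos z) le_rfl]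
    _ = (1 + s) * wNorm a b (fun _ => 1) := by
        rw [mul_assoc, ← ENNReal.ofReal_mul (by positivity),
          show √C₀ / 2 * (2 * √C₀) = C₀ by
            linear_combination Real.mul_self_sqrt (tail_pos hw hwi (fun z _ => weight_pos z)
              le_rfl).le,
          wNorm_one hwi]
        ring

include hw hwi hρ in
lemma iSup_wNorm_iterate_Titer_one_lt_top (hr : 8 * ENNReal.ofReal lam * OmegaPlus a b < 1) :
    ⨆ n, wNorm a b ((Titer a b lam)^[n] (fun _ => 1)) < ⊤ :=
  (iSup_le fun n => (wNorm_iterate_Titer_one_le hw hwi hρ n).trans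
    (mul_le_mul_left (one_add_sum_Icc_one_pow_le _ n) _)).trans_lt
      (ENNReal.mul_lt_top (ENNReal.inv_lt_top.2 (tsub_pos_of_lt hr))
        ((wNorm_one hwi).trans_lt ENNReal.ofReal_lt_top))

end Iteration

section Limit

variable {a b : ℝ → ℝ} {lam x : ℝ} (hw : ContinuousOn (weight a b) (Ici 0))
  (hρ : ContinuousOn (density a b) (Ici 0))

include hρ in
lemma aemeasurable_Titer (f : ℝ → ℝ≥0∞) :
    AEMeasurable (Titer a b lam f) (volume.restrict (Ioi 0)) := by
  have h1 : AEMeasurable (S1 a b f) (volume.restrict (Ioi 0)) :=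
    (aemeasurable_ofReal_of_continuousOn_Ici (continuousOn_Ici_primitive hρ)).mul
      (Antitone.measurable fun s t hst => lintegral_mono_set (Ioi_subset_Ioi hst)).aemeasurable
  have h2 : AEMeasurable (S2 a b f) (volume.restrict (Ioi 0)) :=
    (Monotone.measurable fun s t hst =>
      lintegral_mono_set (Ioo_subset_Ioo_right hst)).aemeasurable
  exact aemeasurable_const.add ((h1.add h2).const_mul _)

include hρ in
lemma aemeasurable_iterate_Titer_one (n : ℕ) :
    AEMeasurable ((Titer a b lam)^[n] (fun _ => 1)) (volume.restrict (Ioi 0)) := by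
  cases n with
  | zero => exact aemeasurable_const
  | succ n =>
    rw [Function.iterate_succ']
    exact aemeasurable_Titer hρ _

include hw hρ in
lemma Titer_iSup {f : ℕ → ℝ → ℝ≥0∞} (hf : ∀ n, AEMeasurable (f n) (volume.restrict (Ioi 0)))
    (hmono : ∀ z ∈ Ioi (0:ℝ), Monotone fun n => f n z) (hx : 0 ≤ x) :
    Titer a b lam (fun z => ⨆ n, f n z) x = ⨆ n, Titer a b lam (f n) x := by
  have hS1 : S1 a b (fun z => ⨆ n, f n z) x = ⨆ n, S1 a b (f n) x := by
    rw [S1_apply, lintegral_iSup_mul (fun n => (hf n).mono_set (Ioi_subset_Ioi hx))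
      ((aemeasurable_ofReal_of_continuousOn_Ici hw).mono_set (Ioi_subset_Ioi hx))
      ((ae_restrict_iff' measurableSet_Ioi).2 (.of_forall fun z hz => hmono z (hx.trans_lt hz))),
      ENNReal.mul_iSup]
    rfl
  have hS2 : S2 a b (fun z => ⨆ n, f n z) x = ⨆ n, S2 a b (f n) x :=
    lintegral_iSup_mul (fun n => (hf n).mono_set Ioo_subset_Ioi_self)
      ((aemeasurable_ofReal_of_continuousOn_Ici (hw.mul (continuousOn_Ici_primitive hρ))).mono_set
        Ioo_subset_Ioi_self)
      ((ae_restrict_iff' measurableSet_Ioo).2 (.of_forall fun z hz => hmono z hz.1))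
  have hS1_mono : Monotone fun n => S1 a b (f n) x := fun m n hmn =>
    S1_mono (fun z hz => hmono z hz hmn) hx
  have hS2_mono : Monotone fun n => S2 a b (f n) x := fun m n hmn =>
    S2_mono (fun z hz => hmono z hz hmn)
  rw [Titer, hS1, hS2, ENNReal.iSup_add_iSup_of_monotone hS1_mono hS2_mono, ENNReal.mul_iSup,
    ENNReal.add_iSup]
  rfl

include hw hρ in
lemma iSup_iterate_Titer_one_eq (hx : 0 < x) :
    ⨆ n, (Titer a b lam)^[n] (fun _ => 1) x =
      Titer a b lam (fun z => ⨆ n, (Titer a b lam)^[n] (fun _ => 1) z) x := by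
  rw [Titer_iSup hw hρ (aemeasurable_iterate_Titer_one hρ)
    (fun z hz => monotone_iterate_Titer_one hz) hx.le,
    ← (monotone_iterate_Titer_one hx).iSup_nat_add 1]
  simp only [Function.iterate_succ_apply']

include hw hρ in
lemma wNorm_iSup_iterate_Titer_one :
    wNorm a b (fun z => ⨆ n, (Titer a b lam)^[n] (fun _ => 1) z) =
      ⨆ n, wNorm a b ((Titer a b lam)^[n] (fun _ => 1)) :=
  lintegral_iSup_mul (aemeasurable_iterate_Titer_one hρ)
    (aemeasurable_ofReal_of_continuousOn_Ici hw)
    ((ae_restrict_iff' measurableSet_Ioi).2 (.of_forall fun _ hz => monotone_iterate_Titer_one hz))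

include hw in
lemma ae_lt_top_of_wNorm_ne_top {f : ℝ → ℝ≥0∞} (hf : AEMeasurable f (volume.restrict (Ioi 0)))
    (h : wNorm a b f ≠ ⊤) : ∀ᵐ x ∂(volume.restrict (Ioi 0)), f x < ⊤ := by
  filter_upwards [ae_lt_top' (hf.mul (aemeasurable_ofReal_of_continuousOn_Ici hw)) h] with x hx
  exact ENNReal.lt_top_of_mul_ne_top_left hx.ne (ENNReal.ofReal_pos.2 (weight_pos x)).ne'

include hρ in
lemma lintegral_Ioo_ofReal_density (hρ_nonneg : ∀ x ∈ Ici (0:ℝ), 0 ≤ density a b x)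
    (hx : 0 ≤ x) :
    ∫⁻ y in Ioo 0 x, ENNReal.ofReal (density a b y) = ENNReal.ofReal (densityIntegral a b x) := by
  rw [setLIntegral_congr Ioo_ae_eq_Ioc, densityIntegral, intervalIntegral.integral_of_le hx,
    ofReal_integral_eq_lintegral_ofReal
      ((hρ.mono Icc_subset_Ici_self).integrableOn_Icc.mono_set Ioc_subset_Icc_self)
      ((ae_restrict_iff' measurableSet_Ioc).2 (.of_forall fun y hy => hρ_nonneg y hy.1.le))]

include hw hρ in
lemma lintegral_density_mul_lintegral_Ioi (hρ_nonneg : ∀ x ∈ Ici (0:ℝ), 0 ≤ density a b x)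
    {f : ℝ → ℝ≥0∞} (hf : AEMeasurable f (volume.restrict (Ioi 0))) (hx : 0 ≤ x) :
    ∫⁻ y in Ioo 0 x, ENNReal.ofReal (density a b y) *
        ∫⁻ z in Ioi y, f z * ENNReal.ofReal (weight a b z) =
      S1 a b f x + S2 a b f x := by
  rw [lintegral_Ioo_mul_lintegral_Ioi (g := fun z => f z * ENNReal.ofReal (weight a b z))
    (aemeasurable_ofReal_of_continuousOn_Ici hρ)
    (hf.mul (aemeasurable_ofReal_of_continuousOn_Ici hw)) hx,
    lintegral_Ioo_ofReal_density hρ hρ_nonneg hx, S1_apply, S2_apply]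
  congr 1
  refine setLIntegral_congr_fun measurableSet_Ioo fun z hz => ?_
  rw [lintegral_Ioo_ofReal_density hρ hρ_nonneg hz.1.le, ENNReal.ofReal_mul (weight_pos z).le,
    mul_assoc]

end Limit

theorem stmt18_general (a b : ℝ → ℝ)
    (ha : ContDiffOn ℝ 1 a (Ici 0)) (hapos : ∀ x ∈ Ici (0:ℝ), 0 < a x)
    (hb : ContinuousOn b (Ici 0))
    (hfin : ∫⁻ x in Ioi (0:ℝ), ENNReal.ofReal (Real.exp (2 * Bfun a b x)) < ⊤)
    (lam : ℝ) :
    (∀ n : ℕ, 1 ≤ n →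
      wNorm a b ((Titer a b lam)^[n] (fun _ => 1)) ≤
        (1 + ∑ k ∈ Finset.Icc 1 n, (8 * ENNReal.ofReal lam * OmegaPlus a b) ^ k) *
          wNorm a b (fun _ => 1)) ∧
    (ENNReal.ofReal lam < 1 / (8 * OmegaPlus a b) →
      (⨆ n : ℕ, wNorm a b ((Titer a b lam)^[n] (fun _ => 1))) < ⊤ ∧
      (∀ᵐ x ∂(volume.restrict (Ioi (0:ℝ))),
        (⨆ n : ℕ, (Titer a b lam)^[n] (fun _ => 1) x) < ⊤) ∧
      (∀ x ∈ Ioi (0:ℝ),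
        (⨆ n : ℕ, (Titer a b lam)^[n] (fun _ => 1) x) =
          1 + 2 * ENNReal.ofReal lam *
            ∫⁻ y in Ioo (0:ℝ) x,
              ENNReal.ofReal ((a y)⁻¹ * Real.exp (-2 * Bfun a b y)) *
                ∫⁻ z in Ioi y,
                  (⨆ n : ℕ, (Titer a b lam)^[n] (fun _ => 1) z) *
                    ENNReal.ofReal (Real.exp (2 * Bfun a b z)))) := by
  have hw := continuousOn_weight ha.continuousOn hapos hb
  have hwi := integrableOn_weight hw hfin
  have hρ := continuousOn_density ha.continuousOn hapos hb
  refine ⟨fun n _ => wNorm_iterate_Titer_one_le hw hwi hρ n, fun hsmall => ?_⟩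
  have hr : 8 * ENNReal.ofReal lam * OmegaPlus a b < 1 := by
    simpa only [mul_comm, mul_left_comm] using ENNReal.mul_lt_of_lt_div hsmall
  have hsup := iSup_wNorm_iterate_Titer_one_lt_top hw hwi hρ hr
  have hlim_meas := AEMeasurable.iSup (aemeasurable_iterate_Titer_one (lam := lam) hρ)
  refine ⟨hsup, ae_lt_top_of_wNorm_ne_top hw hlim_meas
    ((wNorm_iSup_iterate_Titer_one hw hρ).trans_ne hsup.ne), fun x hx => ?_⟩
  rw [iSup_iterate_Titer_one_eq hw hρ hx, Titer,
    ← lintegral_density_mul_lintegral_Ioi hw hρ (fun _ hy => density_nonneg hapos hy) hlim_meas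
      hx.le]
  rfl

theorem stmt18 (a b : ℝ → ℝ)
    (ha : ContDiffOn ℝ 1 a (Ici 0)) (hapos : ∀ x ∈ Ici (0:ℝ), 0 < a x)
    (hb : ContinuousOn b (Ici 0))
    (hinf : ∫⁻ x in Ioi (0:ℝ),
        ENNReal.ofReal ((a x)⁻¹ * Real.exp (-2 * Bfun a b x)) = ⊤)
    (hfin : ∫⁻ x in Ioi (0:ℝ), ENNReal.ofReal (Real.exp (2 * Bfun a b x)) < ⊤)
    (hΩ : OmegaPlus a b < ⊤)
    (lam : ℝ) (hlam : 0 < lam) :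
    (∀ n : ℕ, 1 ≤ n →
      wNorm a b ((Titer a b lam)^[n] (fun _ => 1)) ≤
        (1 + ∑ k ∈ Finset.Icc 1 n, (8 * ENNReal.ofReal lam * OmegaPlus a b) ^ k) *
          wNorm a b (fun _ => 1)) ∧
    (ENNReal.ofReal lam < 1 / (8 * OmegaPlus a b) →
      (⨆ n : ℕ, wNorm a b ((Titer a b lam)^[n] (fun _ => 1))) < ⊤ ∧
      (∀ᵐ x ∂(volume.restrict (Ioi (0:ℝ))),
        (⨆ n : ℕ, (Titer a b lam)^[n] (fun _ => 1) x) < ⊤) ∧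
      (∀ x ∈ Ioi (0:ℝ),
        (⨆ n : ℕ, (Titer a b lam)^[n] (fun _ => 1) x) =
          1 + 2 * ENNReal.ofReal lam *
            ∫⁻ y in Ioo (0:ℝ) x,
              ENNReal.ofReal ((a y)⁻¹ * Real.exp (-2 * Bfun a b y)) *
                ∫⁻ z in Ioi y,
                  (⨆ n : ℕ, (Titer a b lam)^[n] (fun _ => 1) z) *
                    ENNReal.ofReal (Real.exp (2 * Bfun a b z)))) :=
  stmt18_general a b ha hapos hb hfin lam
end
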